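/- arXiv:1708.04267 — 2 statements merged into one kernel-verified Lean document; each statement's English description precedes it below -/
import Mathlib

section
/- Every set A ⊆ ℕ that is not weakly computably traceable computes an infinite set with intrinsic density 0: there is an infinite S ⊆ ℕ with S ≤_T A such that for every computable injection p : ℕ → ℕ, lim_{n→∞} ρ_n(p⁻¹(S)) = 0. -/
open Filter

/-- Partial density `ρ_n(S) = |S ∩ [0,n)| / n` (as a real number). -/
noncomputable def pden (S : Set ℕ) (n : ℕ) : ℝ := ((S ∩ Set.Iio n).ncard : ℝ) / n

/-- Partial functions `ℕ →. ℕ` computable relative to an oracle `O : ℕ → ℕ`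
(oracle version of `Nat.Partrec`). -/
inductive RecursiveInOracle (O : ℕ → ℕ) : (ℕ →. ℕ) → Prop
  | zero : RecursiveInOracle O (pure 0)
  | succ : RecursiveInOracle O ↑Nat.succ
  | left : RecursiveInOracle O ↑fun n : ℕ => n.unpair.1
  | right : RecursiveInOracle O ↑fun n : ℕ => n.unpair.2
  | oracle : RecursiveInOracle O ↑O
  | pair {f g} : RecursiveInOracle O f → RecursiveInOracle O g →
      RecursiveInOracle O fun n => Nat.pair <$> f n <*> g n
  | comp {f g} : RecursiveInOracle O f → RecursiveInOracle O g →
      RecursiveInOracle O fun n => g n >>= f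
  | prec {f g} : RecursiveInOracle O f → RecursiveInOracle O g →
      RecursiveInOracle O (Nat.unpaired fun a n =>
        n.rec (f a) fun y IH => do let i ← IH; g (Nat.pair a (Nat.pair y i)))
  | rfind {f} : RecursiveInOracle O f →
      RecursiveInOracle O fun a => Nat.rfind fun n => (fun m => m = 0) <$> f (Nat.pair a n)

open Classical in
/-- Characteristic function of a set of naturals. -/
noncomputable def chi (A : Set ℕ) : ℕ → ℕ := fun n => if n ∈ A then 1 else 0

/-- `f ≤_T A`: the function `f` is computable relative to the set `A`. -/
def FunLeT (f : ℕ → ℕ) (A : Set ℕ) : Prop := RecursiveInOracle (chi A) ↑f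

/-- `S ≤_T A`: the set `S` is computable relative to the set `A` (Turing reducibility). -/
def SetLeT (S A : Set ℕ) : Prop := RecursiveInOracle (chi A) ↑(chi S)

/-- `S ≡_T A`: Turing equivalence of sets. -/
def SetEquivT (S A : Set ℕ) : Prop := SetLeT S A ∧ SetLeT A S

/-- `S` has intrinsic density 0: every computable injection samples `S` with density 0. -/
def ID0 (S : Set ℕ) : Prop :=
  ∀ p : ℕ → ℕ, Computable p → Function.Injective p →
    Tendsto (fun n => pden (p ⁻¹' S) n) atTop (nhds 0)

/-- `S` has intrinsic lower density 0. -/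
def ILD0 (S : Set ℕ) : Prop :=
  ∀ p : ℕ → ℕ, Computable p → Function.Injective p →
    liminf (fun n => pden (p ⁻¹' S) n) atTop = 0

/-- `A` is weakly computably traceable. -/
def WCT (A : Set ℕ) : Prop :=
  ∃ h : ℕ → ℕ, Computable h ∧ ∀ f : ℕ → ℕ, FunLeT f A →
    ∃ V : ℕ → Finset ℕ, Computable V ∧ (∀ n, (V n).card ≤ h n) ∧
      ∃ᶠ n in atTop, f n ∈ V n

/-- `g` dominates every computable function. -/
def Dominant (g : ℕ → ℕ) : Prop :=
  ∀ f : ℕ → ℕ, Computable f → ∀ᶠ n in atTop, f n < g n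

/-- `f` is diagonally non-computable. -/
def DNC (f : ℕ → ℕ) : Prop :=
  ∀ e : ℕ, ∀ y ∈ (Denumerable.ofNat Nat.Partrec.Code e).eval e, f e ≠ y

-- RecursiveInOracle API
theorem RecursiveInOracle.of_natPartrec {O : ℕ → ℕ} {f : ℕ →. ℕ} (h : Nat.Partrec f) :
    RecursiveInOracle O f := by
  induction h with
  | zero => exact .zero
  | succ => exact .succ
  | left => exact .left
  | right => exact .right
  | pair _ _ ih1 ih2 => exact .pair ih1 ih2
  | comp _ _ ih1 ih2 => exact .comp ih1 ih2
  | prec _ _ ih1 ih2 => exact .prec ih1 ih2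
  | rfind _ ih => exact .rfind ih

theorem RecursiveInOracle.of_computable {O : ℕ → ℕ} {f : ℕ → ℕ} (h : Computable f) :
    RecursiveInOracle O ↑f :=
  RecursiveInOracle.of_natPartrec (Partrec.nat_iff.1 h)

theorem RecursiveInOracle.totalComp {O : ℕ → ℕ} {f g : ℕ → ℕ} (hf : RecursiveInOracle O ↑f) (hg : RecursiveInOracle O ↑g) :
    RecursiveInOracle O ↑(fun n => f (g n)) := by
  have h := hf.comp hg
  have e : (fun n => (g : ℕ →. ℕ) n >>= (f : ℕ →. ℕ)) = ((fun n => f (g n) : ℕ → ℕ) : ℕ →. ℕ) := by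
    funext n; simp [PFun.coe_val]
    exact Part.bind_some (g n) _
  rwa [e] at h

theorem RecursiveInOracle.totalPair {O : ℕ → ℕ} {f g : ℕ → ℕ} (hf : RecursiveInOracle O ↑f) (hg : RecursiveInOracle O ↑g) :
    RecursiveInOracle O ↑(fun n => Nat.pair (f n) (g n)) := by
  have h := hf.pair hg
  have e : (fun n => Nat.pair <$> (f : ℕ →. ℕ) n <*> (g : ℕ →. ℕ) n)
      = ((fun n => Nat.pair (f n) (g n) : ℕ → ℕ) : ℕ →. ℕ) := by
    funext n; simp [PFun.coe_val, Seq.seq]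
  rwa [e] at h

-- Trace machinery
def traceT (p : ℕ → ℕ) (n j : ℕ) : ℕ → Bool
  | 0 => false
  | m + 1 => traceT p n j m || decide (p m = Nat.pair n j)

def traceB (p : ℕ → ℕ) : ℕ → ℕ
  | 0 => 0
  | m + 1 => max (traceB p m) (p m)

def traceF (p : ℕ → ℕ) (n : ℕ) : ℕ → List ℕ
  | 0 => []
  | j + 1 => cond (traceT p n j (n * n)) (traceF p n j ++ [j]) (traceF p n j)

def traceL (p : ℕ → ℕ) (n : ℕ) : List ℕ := traceF p n (traceB p (n * n) + 1)

def traceE (p : ℕ → ℕ) (n : ℕ) : ℕ := Encodable.encode (Denumerable.lower' (traceL p n) 0)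

def traceV (p : ℕ → ℕ) (n : ℕ) : Finset ℕ := Denumerable.ofNat (Finset ℕ) (traceE p n)

theorem traceT_iff (p : ℕ → ℕ) (n j : ℕ) : ∀ m, traceT p n j m = true ↔ ∃ k < m, p k = Nat.pair n j := by
  intro m
  induction m with
  | zero => simp [traceT]
  | succ m ih =>
    simp only [traceT, Bool.or_eq_true, decide_eq_true_iff, ih, Nat.lt_succ_iff_lt_or_eq]
    constructor
    · rintro (⟨k, hk, hpk⟩ | hpm)
      · exact ⟨k, Or.inl hk, hpk⟩
      · exact ⟨m, Or.inr rfl, hpm⟩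
    · rintro ⟨k, hk | rfl, hpk⟩
      · exact Or.inl ⟨k, hk, hpk⟩
      · exact Or.inr hpk

theorem le_traceB (p : ℕ → ℕ) : ∀ {m k : ℕ}, m < k → p m ≤ traceB p k := by
  intro m k
  induction k with
  | zero => intro h; exact absurd h (Nat.not_lt_zero m)
  | succ k ih =>
    intro h
    rcases Nat.lt_succ_iff_lt_or_eq.1 h with h' | rfl
    · exact le_trans (ih h') (le_max_left _ _) |>.trans (le_refl _) |>.trans_eq (by rfl)
    · exact le_max_right _ _

theorem traceF_mem (p : ℕ → ℕ) (n : ℕ) :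
    ∀ j v, v ∈ traceF p n j ↔ v < j ∧ traceT p n v (n * n) = true := by
  intro j
  induction j with
  | zero => simp [traceF]
  | succ j ih =>
    intro v
    unfold traceF
    cases hT : traceT p n j (n * n) with
    | false =>
      simp only [cond_false, ih, Nat.lt_succ_iff_lt_or_eq]
      constructor
      · rintro ⟨h1, h2⟩; exact ⟨Or.inl h1, h2⟩
      · rintro ⟨h1 | rfl, h2⟩
        · exact ⟨h1, h2⟩
        · rw [hT] at h2; cases h2
    | true =>
      simp only [cond_true, List.mem_append, List.mem_singleton, ih, Nat.lt_succ_iff_lt_or_eq]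
      constructor
      · rintro (⟨h1, h2⟩ | rfl)
        · exact ⟨Or.inl h1, h2⟩
        · exact ⟨Or.inr rfl, hT⟩
      · rintro ⟨h1 | rfl, h2⟩
        · exact Or.inl ⟨h1, h2⟩
        · exact Or.inr rfl

theorem traceF_sorted (p : ℕ → ℕ) (n : ℕ) : ∀ j, (traceF p n j).Pairwise (· < ·) := by
  intro j
  induction j with
  | zero => simp [traceF]
  | succ j ih =>
    unfold traceF
    cases hT : traceT p n j (n * n) with
    | false => simpa using ih
    | true =>
      simp only [cond_true]
      rw [List.pairwise_append]
      refine ⟨ih, List.pairwise_singleton _ _, ?_⟩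
      intro a ha b hb
      rw [List.mem_singleton] at hb
      subst hb
      exact ((traceF_mem p n _ a).1 ha).1

theorem traceL_mem (p : ℕ → ℕ) (n v : ℕ) :
    v ∈ traceL p n ↔ ∃ m < n * n, p m = Nat.pair n v := by
  rw [traceL, traceF_mem, traceT_iff]
  constructor
  · rintro ⟨_, h⟩; exact h
  · rintro ⟨m, hm, hpm⟩
    refine ⟨?_, ⟨m, hm, hpm⟩⟩
    have h1 : v ≤ Nat.pair n v := by
      have := Nat.unpair_right_le (Nat.pair n v)
      rwa [Nat.unpair_pair] at this
    have h2 : p m ≤ traceB p (n * n) := le_traceB p hm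
    rw [hpm] at h2; omega
    
theorem traceL_sorted (p : ℕ → ℕ) (n : ℕ) : (traceL p n).Pairwise (· < ·) :=
  traceF_sorted p n _

theorem ofNat_finset_eq (k : ℕ) : Denumerable.ofNat (Finset ℕ) k =
    Finset.map (Denumerable.eqv ℕ).symm.toEmbedding
      (Denumerable.raise'Finset (Denumerable.ofNat (List ℕ) k) 0) :=
  Denumerable.ofNat_of_decode rfl

theorem traceV_mem (p : ℕ → ℕ) (n v : ℕ) : v ∈ traceV p n ↔ v ∈ traceL p n := by
  rw [traceV, traceE, ofNat_finset_eq, Denumerable.ofNat_encode]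
  have hr : Denumerable.raise' (Denumerable.lower' (traceL p n) 0) 0 = traceL p n :=
    Denumerable.raise_lower' (fun m _ => Nat.zero_le m) (traceL_sorted p n).sortedLT
  constructor
  · intro hv
    rcases Finset.mem_map.1 hv with ⟨u, hu, huv⟩
    have : u = v := by
      have : (Denumerable.eqv ℕ).symm u = u := rfl
      rw [← huv]; exact this.symm
    subst this
    have : u ∈ Denumerable.raise' (Denumerable.lower' (traceL p n) 0) 0 := by
      exact Multiset.mem_coe.1 (Finset.mem_mk.1 hu)
    rwa [hr] at this
  · intro hv
    refine Finset.mem_map.2 ⟨v, ?_, rfl⟩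
    show v ∈ Denumerable.raise'Finset _ 0
    simp only [Denumerable.raise'Finset, Finset.mem_mk, Multiset.mem_coe]
    show v ∈ Denumerable.raise' (Denumerable.lower' (traceL p n) 0) 0
    rw [hr]
    exact hv

theorem traceV_card (p : ℕ → ℕ) (n : ℕ) : (traceV p n).card ≤ n * n := by
  have hsub : traceV p n ⊆ (Finset.range (n * n)).image (fun m => (p m).unpair.2) := by
    intro v hv
    rcases (traceL_mem p n v).1 ((traceV_mem p n v).1 hv) with ⟨m, hm, hpm⟩
    exact Finset.mem_image.2 ⟨m, Finset.mem_range.2 hm, by rw [hpm, Nat.unpair_pair]⟩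
  calc (traceV p n).card ≤ _ := Finset.card_le_card hsub
    _ ≤ (Finset.range (n * n)).card := Finset.card_image_le
    _ = n * n := Finset.card_range _

theorem lower'_foldl : ∀ (l : List ℕ) (r : List ℕ) (k : ℕ),
    (List.foldl (fun (s : List ℕ × ℕ) (b : ℕ) => (s.1 ++ [b - s.2], b + 1)) (r, k) l).1
      = r ++ Denumerable.lower' l k := by
  intro l
  induction l with
  | nil => intro r k; simp [Denumerable.lower']
  | cons m l ih =>
    intro r k
    simp only [List.foldl_cons, Denumerable.lower']
    rw [ih]
    simp

theorem lower'_primrec : Primrec (fun l : List ℕ => Denumerable.lower' l 0) := by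
  have h : Primrec (fun l : List ℕ =>
      (List.foldl (fun (s : List ℕ × ℕ) (b : ℕ) => (s.1 ++ [b - s.2], b + 1)) ([], 0) l).1) := by
    apply Primrec.fst.comp
    apply Primrec.list_foldl (f := fun l : List ℕ => l) (g := fun _ => (([] : List ℕ), (0 : ℕ)))
      (h := fun (_ : List ℕ) (q : (List ℕ × ℕ) × ℕ) => (q.1.1 ++ [q.2 - q.1.2], q.2 + 1))
      Primrec.id (Primrec.const _)
    exact Primrec.to₂ <| Primrec.pair
      (Primrec.list_concat.comp (Primrec.fst.comp (Primrec.fst.comp Primrec.snd))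
        (Primrec.nat_sub.comp (Primrec.snd.comp Primrec.snd)
          (Primrec.snd.comp (Primrec.fst.comp Primrec.snd))))
      (Primrec.succ.comp (Primrec.snd.comp Primrec.snd))
  exact h.of_eq fun l => by rw [lower'_foldl]; simp

theorem traceTest_computable {p : ℕ → ℕ} (hp : Computable p) :
    Computable₂ (fun n j => traceT p n j (n * n)) := by
  have key : ∀ k n j, (Nat.rec false
      (fun m IH => IH || decide (p m = Nat.pair n j)) k : Bool) = traceT p n j k := by
    intro k n j
    induction k with
    | zero => rfl
    | succ k ih => simp only [traceT, ih]
  have h : Computable (fun a : ℕ × ℕ => (Nat.rec false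
      (fun m IH => IH || decide (p m = Nat.pair a.1 a.2)) (a.1 * a.1) : Bool)) := by
    apply Computable.nat_rec (f := fun a : ℕ × ℕ => a.1 * a.1)
      (g := fun _ : ℕ × ℕ => false)
      (h := fun (a : ℕ × ℕ) (q : ℕ × Bool) => q.2 || decide (p q.1 = Nat.pair a.1 a.2))
    · exact (Primrec.nat_mul.comp Primrec.fst Primrec.fst).to_comp
    · exact Computable.const _
    · apply Computable₂.mk
      apply Computable₂.comp (f := fun a b => a || b) Primrec.or.to_comp
      · exact (Primrec.snd.comp Primrec.snd).to_comp
      · apply Computable₂.comp (f := fun (a b : ℕ) => decide (a = b)) Primrec.eq.decide.to_comp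
        · exact hp.comp ((Primrec.fst.comp Primrec.snd).to_comp)
        · exact (Primrec₂.natPair.comp (Primrec.fst.comp Primrec.fst)
            (Primrec.snd.comp Primrec.fst)).to_comp
  exact Computable₂.mk (h.of_eq fun a => key _ _ _)

theorem traceB_computable {p : ℕ → ℕ} (hp : Computable p) : Computable (traceB p) := by
  have key : ∀ k, (Nat.rec 0 (fun m IH => max IH (p m)) k : ℕ) = traceB p k := by
    intro k
    induction k with
    | zero => rfl
    | succ k ih => simp only [traceB, ih]
  have h : Computable (fun a : ℕ => (Nat.rec 0 (fun m IH => max IH (p m)) a : ℕ)) := by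
    apply Computable.nat_rec Computable.id (Computable.const 0)
      (h := fun (_ : ℕ) (q : ℕ × ℕ) => max q.2 (p q.1))
    exact Computable₂.mk (Primrec.nat_max.to_comp.comp (Computable.snd.comp Computable.snd)
      (hp.comp (Computable.fst.comp Computable.snd)))
  exact h.of_eq fun a => key a

theorem traceF_computable {p : ℕ → ℕ} (hp : Computable p) :
    Computable₂ (traceF p) := by
  have key : ∀ (n k : ℕ), (Nat.rec []
      (fun j IH => cond (traceT p n j (n * n)) (IH ++ [j]) IH) k : List ℕ) = traceF p n k := by
    intro n k
    induction k with
    | zero => rfl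
    | succ k ih => simp only [traceF, ih]
  have h : Computable (fun a : ℕ × ℕ => (Nat.rec []
      (fun j IH => cond (traceT p a.1 j (a.1 * a.1)) (IH ++ [j]) IH) a.2 : List ℕ)) := by
    apply Computable.nat_rec Computable.snd (Computable.const [])
      (h := fun (a : ℕ × ℕ) (q : ℕ × List ℕ) => cond (traceT p a.1 q.1 (a.1 * a.1)) (q.2 ++ [q.1]) q.2)
    apply Computable₂.mk
    apply Computable.cond
    · exact (traceTest_computable hp).comp (Computable.fst.comp Computable.fst)
        (Computable.fst.comp Computable.snd)
    · exact Computable.list_concat.comp (Computable.snd.comp Computable.snd)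
        (Computable.fst.comp Computable.snd)
    · exact Computable.snd.comp Computable.snd
  exact Computable₂.mk (h.of_eq fun a => key a.1 a.2)

theorem traceV_computable {p : ℕ → ℕ} (hp : Computable p) : Computable (traceV p) := by
  have hmul : Computable (fun n : ℕ => n * n) :=
    (Primrec.nat_mul.comp Primrec.id Primrec.id).to_comp
  have hL : Computable (traceL p) := by
    have : Computable (fun n : ℕ => traceF p n (traceB p (n * n) + 1)) :=
      (traceF_computable hp).comp Computable.id
        (Computable.succ.comp ((traceB_computable hp).comp hmul))
    exact this.of_eq fun n => rfl
  have hE : Computable (traceE p) :=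
    Computable.encode.comp (lower'_primrec.to_comp.comp hL)
  exact (Computable.ofNat (Finset ℕ)).comp hE


theorem sqrt_tendsto_atTop : Tendsto Nat.sqrt atTop atTop := by
  apply tendsto_atTop_atTop.2
  intro b
  exact ⟨b * b, fun a ha => Nat.le_sqrt.2 ha⟩

theorem bound_tendsto_zero (c : ℕ) :
    Tendsto (fun N : ℕ => ((c + Nat.sqrt N + 1 : ℕ) : ℝ) / N) atTop (nhds 0) := by
  have h1 : Tendsto (fun N : ℕ => ((c + 1 : ℕ) : ℝ) / N) atTop (nhds 0) :=
    tendsto_const_div_atTop_nhds_zero_nat _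
  have h2 : Tendsto (fun N : ℕ => (1 : ℝ) / (Nat.sqrt N : ℝ)) atTop (nhds 0) := by
    have := (tendsto_const_div_atTop_nhds_zero_nat (1 : ℝ)).comp sqrt_tendsto_atTop
    exact this
  have h3 : Tendsto (fun N : ℕ => ((c + 1 : ℕ) : ℝ) / N + (1 : ℝ) / (Nat.sqrt N : ℝ))
      atTop (nhds 0) := by simpa using h1.add h2
  apply tendsto_of_tendsto_of_tendsto_of_le_of_le' tendsto_const_nhds h3
  · filter_upwards with N
    positivity
  · filter_upwards [eventually_ge_atTop 1] with N hN
    have hNpos : (0 : ℝ) < N := by exact_mod_cast hN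
    have hsq1 : 1 ≤ Nat.sqrt N := Nat.le_sqrt.2 (by simpa using hN)
    have hsqpos : (0 : ℝ) < (Nat.sqrt N : ℝ) := by exact_mod_cast hsq1
    have key : ((Nat.sqrt N : ℕ) : ℝ) / N ≤ 1 / (Nat.sqrt N : ℝ) := by
      rw [div_le_div_iff₀ hNpos hsqpos]
      have : (Nat.sqrt N) * (Nat.sqrt N) ≤ N := Nat.sqrt_le N
      calc ((Nat.sqrt N : ℕ) : ℝ) * (Nat.sqrt N : ℝ) = ((Nat.sqrt N * Nat.sqrt N : ℕ) : ℝ) := by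
            push_cast; ring
        _ ≤ (N : ℝ) := by exact_mod_cast this
        _ = (N : ℝ) * 1 := by ring
        _ ≤ 1 * (N : ℝ) := by ring_nf; exact le_rfl
    have expand : ((c + Nat.sqrt N + 1 : ℕ) : ℝ) / N
        = ((c + 1 : ℕ) : ℝ) / N + ((Nat.sqrt N : ℕ) : ℝ) / N := by
      push_cast; ring
    rw [expand]
    exact add_le_add le_rfl key


theorem stmt7 (A : Set ℕ) (hA : ¬ WCT A) :
    ∃ S : Set ℕ, S.Infinite ∧ SetLeT S A ∧ ID0 S := by
  -- Step 1: get an A-computable function escaping all computable traces of size n*n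
  have hmul : Computable (fun n : ℕ => n * n) :=
    (Primrec.nat_mul.comp Primrec.id Primrec.id).to_comp
  have h1 : ¬ ∀ f : ℕ → ℕ, FunLeT f A →
      ∃ V : ℕ → Finset ℕ, Computable V ∧ (∀ n, (V n).card ≤ n * n) ∧
        ∃ᶠ n in atTop, f n ∈ V n := fun hall => hA ⟨fun n => n * n, hmul, hall⟩
  push_neg at h1
  obtain ⟨f, hfA, hfV⟩ := h1
  -- the set S
  set S : Set ℕ := Set.range (fun n => Nat.pair n (f n)) with hS
  have hpairinj : Function.Injective (fun n => Nat.pair n (f n)) := by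
    intro a b hab
    have := congrArg (fun x => (Nat.unpair x).1) hab
    simpa [Nat.unpair_pair] using this
  have hmemS : ∀ x, x ∈ S ↔ Nat.pair x.unpair.1 (f x.unpair.1) = x := by
    intro x
    constructor
    · rintro ⟨k, hk⟩
      simp only at hk
      have : (Nat.unpair x).1 = k := by rw [← hk, Nat.unpair_pair]
      rw [this, hk]
    · intro hx
      exact ⟨x.unpair.1, hx⟩
  refine ⟨S, ?_, ?_, ?_⟩
  · exact Set.infinite_range_of_injective hpairinj
  · -- S ≤_T A
    have hchi : chi S = fun x =>
        (fun y : ℕ => if Nat.pair y.unpair.1.unpair.1 y.unpair.2 = y.unpair.1 then 1 else 0)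
          (Nat.pair x (f x.unpair.1)) := by
      funext x
      simp only [Nat.unpair_pair]
      by_cases hx : x ∈ S
      · rw [chi, if_pos hx, if_pos ((hmemS x).1 hx)]
      · rw [chi, if_neg hx, if_neg (fun h => hx ((hmemS x).2 h))]
    have hF : Computable (fun y : ℕ =>
        if Nat.pair y.unpair.1.unpair.1 y.unpair.2 = y.unpair.1 then 1 else 0) := by
      apply Primrec.to_comp
      apply Primrec.ite ?_ (Primrec.const 1) (Primrec.const 0)
      apply PrimrecRel.comp Primrec.eq
      · exact Primrec₂.natPair.comp
          (Primrec.fst.comp (Primrec.unpair.comp (Primrec.fst.comp Primrec.unpair)))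
          (Primrec.snd.comp Primrec.unpair)
      · exact Primrec.fst.comp Primrec.unpair
    have hG : RecursiveInOracle (chi A) ↑(fun x : ℕ => Nat.pair x (f x.unpair.1)) := by
      apply RecursiveInOracle.totalPair (RecursiveInOracle.of_computable Computable.id)
      exact RecursiveInOracle.totalComp hfA RecursiveInOracle.left
    have := RecursiveInOracle.totalComp (RecursiveInOracle.of_computable hF) hG
    rw [SetLeT, hchi]
    exact this
  · -- intrinsic density 0
    intro p hp hinj
    have hesc : ∀ᶠ n in atTop, f n ∉ traceV p n :=
      hfV (traceV p) (traceV_computable hp) (traceV_card p)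
    obtain ⟨n0, hn0⟩ := Filter.eventually_atTop.1 hesc
    -- counting bound
    have hcount : ∀ N : ℕ, (p ⁻¹' S ∩ Set.Iio N).ncard ≤ n0 + Nat.sqrt N + 1 := by
      intro N
      set T := p ⁻¹' S ∩ Set.Iio N with hT
      have hTsub : T ⊆ Set.Iio N := Set.inter_subset_right
      have hTfin : T.Finite := (Set.finite_Iio N).subset hTsub
      have hkey : ∀ m ∈ T, (p m).unpair.1 < n0 + Nat.sqrt N + 1 := by
        rintro m ⟨hpS, hmN⟩
        obtain ⟨k, hk⟩ := hpS
        simp only at hk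
        have hu : (p m).unpair.1 = k := by rw [← hk, Nat.unpair_pair]
        rw [hu]
        by_cases hkn : k < n0
        · omega
        · push_neg at hkn
          have hnotin := hn0 k hkn
          rw [traceV_mem, traceL_mem] at hnotin
          have hm2 : ¬ (m < k * k) := fun hmk => hnotin ⟨m, hmk, hk.symm⟩
          push_neg at hm2
          have : k * k < N := lt_of_le_of_lt hm2 hmN
          have : k ≤ Nat.sqrt N := Nat.le_sqrt.2 (le_of_lt this)
          omega
      have hinj2 : Set.InjOn (fun m => (p m).unpair.1) T := by
        rintro m1 ⟨h1, _⟩ m2 ⟨h2, _⟩ heq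
        obtain ⟨k1, hk1⟩ := h1
        obtain ⟨k2, hk2⟩ := h2
        simp only at hk1 hk2 heq
        have e1 : (p m1).unpair.1 = k1 := by rw [← hk1, Nat.unpair_pair]
        have e2 : (p m2).unpair.1 = k2 := by rw [← hk2, Nat.unpair_pair]
        have : k1 = k2 := by rw [← e1, ← e2, heq]
        subst this
        exact hinj (by rw [← hk1, ← hk2])
      calc T.ncard = ((fun m => (p m).unpair.1) '' T).ncard :=
            (Set.ncard_image_of_injOn hinj2).symm
        _ ≤ (Set.Iio (n0 + Nat.sqrt N + 1)).ncard := by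
            apply Set.ncard_le_ncard ?_ (Set.finite_Iio _)
            rintro _ ⟨m, hm, rfl⟩
            exact hkey m hm
        _ = n0 + Nat.sqrt N + 1 := by
            rw [← Finset.coe_Iio, Set.ncard_coe_finset, Nat.card_Iio]
    -- squeeze
    apply tendsto_of_tendsto_of_tendsto_of_le_of_le' tendsto_const_nhds (bound_tendsto_zero n0)
    · filter_upwards with N
      unfold pden
      positivity
    · filter_upwards [eventually_ge_atTop 1] with N hN
      have hNpos : (0 : ℝ) < N := by exact_mod_cast hN
      unfold pden
      gcongr
      exact_mod_cast hcount N
end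

section
/- There exists a hypersimple set with lower density 0: a computably enumerable, co-infinite set A whose complement is hyperimmune, such that liminf_{n→∞} |A ∩ [0,n)| / n = 0. -/
open Filter

namespace Stmt14

open Nat.Partrec (Code)
open Nat.Partrec.Code

/-- Code `c` halts on input 0 exactly at stage `k+1`. -/
def newF (c k : ℕ) : Bool :=
  (evaln (k+1) (Denumerable.ofNat Code c) 0).isSome &&
    !(evaln k (Denumerable.ofNat Code c) 0).isSome

theorem evalnP_primrec : Primrec fun q : ℕ × ℕ => evaln q.2 (Denumerable.ofNat Code q.1) 0 :=
  primrec_evaln.comp <|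
    (Primrec.snd.pair ((Primrec.ofNat Code).comp Primrec.fst)).pair (Primrec.const 0)

theorem newF_primrec : Primrec₂ newF := by
  have h1 : Primrec fun q : ℕ × ℕ => (evaln (q.2+1) (Denumerable.ofNat Code q.1) 0).isSome :=
    Primrec.option_isSome.comp
      (evalnP_primrec.comp (Primrec.fst.pair (Primrec.succ.comp Primrec.snd)))
  have h2 : Primrec fun q : ℕ × ℕ => !(evaln q.2 (Denumerable.ofNat Code q.1) 0).isSome :=
    (Primrec.dom_bool not).comp (Primrec.option_isSome.comp evalnP_primrec)
  exact Primrec.and.comp h1 h2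

theorem newF_unique {c k k'} (h : newF c k = true) (h' : newF c k' = true) : k = k' := by
  simp only [newF, Bool.and_eq_true, Bool.not_eq_true', Option.not_isSome,
    Option.isSome_iff_exists] at h h'
  obtain ⟨⟨x, hx⟩, h2⟩ := h
  obtain ⟨⟨x', hx'⟩, h2'⟩ := h'
  by_contra hne
  rcases Nat.lt_or_ge k k' with hlt | hge
  · have : x ∈ evaln k' (Denumerable.ofNat Code c) 0 :=
      evaln_mono hlt (by simpa [Option.mem_def] using hx)
    rw [Option.mem_def, Option.isNone_iff_eq_none.1 h2'] at this; cases this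
  · have hlt' : k' + 1 ≤ k := by omega
    have : x' ∈ evaln k (Denumerable.ofNat Code c) 0 :=
      evaln_mono hlt' (by simpa [Option.mem_def] using hx')
    rw [Option.mem_def, Option.isNone_iff_eq_none.1 h2] at this; cases this

theorem halts_iff (c : ℕ) :
    (eval (Denumerable.ofNat Code c) 0).Dom ↔ ∃ k, newF c k = true := by
  constructor
  · intro h
    obtain ⟨x, hx⟩ := Part.dom_iff_mem.1 h
    obtain ⟨k, hk⟩ := evaln_complete.1 hx
    have hP : ∃ k, (evaln k (Denumerable.ofNat Code c) 0).isSome := by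
      exact ⟨k, Option.isSome_iff_exists.2 ⟨x, hk⟩⟩
    classical
    have hne : Nat.find hP ≠ 0 := by
      intro h0
      have := Nat.find_spec hP
      rw [h0] at this
      simp [evaln] at this
    obtain ⟨k1, hk1⟩ := Nat.exists_eq_succ_of_ne_zero hne
    have hspec := Nat.find_spec hP
    have hmin : ¬(evaln k1 (Denumerable.ofNat Code c) 0).isSome = true :=
      Nat.find_min hP (by omega)
    rw [hk1] at hspec
    exact ⟨k1, by simp [newF, hspec, hmin]⟩
  · rintro ⟨k, hk⟩
    simp only [newF, Bool.and_eq_true] at hk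
    obtain ⟨x, hx⟩ := Option.isSome_iff_exists.1 hk.1
    exact Part.dom_iff_mem.2 ⟨x, evaln_sound hx⟩



/-- Injective computable enumeration whose even values enumerate the halting set. -/
def enumA (n : ℕ) : ℕ :=
  if newF n.unpair.1 n.unpair.2 then 2 * n.unpair.1 else 2 * n + 1

theorem enumA_primrec : Primrec enumA := by
  have hflag : PrimrecPred fun n : ℕ => newF n.unpair.1 n.unpair.2 = true :=
    PrimrecRel.comp Primrec.eq
      (newF_primrec.comp (Primrec.fst.comp Primrec.unpair) (Primrec.snd.comp Primrec.unpair))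
      (Primrec.const true)
  exact Primrec.ite hflag
    (Primrec.nat_mul.comp (Primrec.const 2) (Primrec.fst.comp Primrec.unpair))
    (Primrec.succ.comp (Primrec.nat_mul.comp (Primrec.const 2) Primrec.id))

theorem enumA_injective : Function.Injective enumA := by
  intro n n' h
  unfold enumA at h
  by_cases h1 : newF n.unpair.1 n.unpair.2 = true <;>
    by_cases h2 : newF n'.unpair.1 n'.unpair.2 = true <;> simp [h1, h2] at h
  · have hc : n.unpair.1 = n'.unpair.1 := by omega
    have hk : n.unpair.2 = n'.unpair.2 := newF_unique (hc ▸ h1) h2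
    have := Nat.pair_unpair n
    have := Nat.pair_unpair n'
    rw [← Nat.pair_unpair n, ← Nat.pair_unpair n', hc, hk]
  · omega
  · omega
  · omega

def W : Set ℕ := Set.range enumA

theorem mem_W_iff (c : ℕ) : 2 * c ∈ W ↔ (eval (Denumerable.ofNat Code c) 0).Dom := by
  rw [halts_iff]
  constructor
  · rintro ⟨n, hn⟩
    by_cases h1 : newF n.unpair.1 n.unpair.2 = true <;> simp [enumA, h1] at hn
    · have hc : n.unpair.1 = c := by omega
      exact ⟨n.unpair.2, hc ▸ h1⟩
    · omega
  · rintro ⟨k, hk⟩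
    refine ⟨Nat.pair c k, ?_⟩
    simp [enumA, Nat.unpair_pair, hk]

theorem W_not_computable : ¬ComputablePred (· ∈ W) := by
  intro h
  apply ComputablePred.halting_problem 0
  obtain ⟨fb, hfb, hW⟩ := ComputablePred.computable_iff.1 h
  refine ComputablePred.computable_iff.2 ⟨fun c => fb (2 * Encodable.encode c), ?_, ?_⟩
  · exact hfb.comp
      (Primrec.nat_mul.comp (Primrec.const 2) Primrec.encode).to_comp
  · funext c
    have h1 : (2 * Encodable.encode c ∈ W) = (fb (2 * Encodable.encode c) : Prop) :=
      congrFun hW _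
    rw [← h1]
    apply propext
    rw [mem_W_iff]
    rw [Denumerable.ofNat_encode]



/-- Fast-growing block boundaries: `g 0 = 0`, `g (k+1) = (k+2) * (g k + 1)`. -/
def g : ℕ → ℕ := fun k => Nat.rec 0 (fun k ih => (k+2) * (ih+1)) k

theorem g_succ (k : ℕ) : g (k+1) = (k+2) * (g k + 1) := rfl

theorem g_primrec : Primrec g :=
  Primrec.nat_rec₁ 0
    (Primrec.nat_mul.comp₂ (Primrec.succ.comp₂ (Primrec.succ.comp₂ Primrec₂.left))
      (Primrec.succ.comp₂ Primrec₂.right))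

theorem g_strictMono : StrictMono g := by
  apply strictMono_nat_of_lt_succ
  intro k
  rw [g_succ]
  nlinarith [Nat.zero_le (g k)]

theorem le_g (k : ℕ) : k ≤ g k := g_strictMono.le_apply

theorem g_mul_bound (k : ℕ) : (k+1) * (g k + 1) ≤ g (k+1) := by
  rw [g_succ]
  exact Nat.mul_le_mul_right _ (by omega)

/-- The index of the block `[g i, g (i+1))` containing `x`. -/
def bIdx : ℕ → ℕ := fun x => Nat.rec 0 (fun x ih => if g (ih+1) ≤ x+1 then ih+1 else ih) x

theorem bIdx_primrec : Primrec bIdx := by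
  apply Primrec.nat_rec₁ 0
  have hc : PrimrecPred fun p : ℕ × ℕ => g (p.2+1) ≤ p.1+1 :=
    PrimrecRel.comp Primrec.nat_le (g_primrec.comp (Primrec.succ.comp Primrec.snd))
      (Primrec.succ.comp Primrec.fst)
  exact Primrec.ite hc (Primrec.succ.comp Primrec.snd) Primrec.snd

theorem bIdx_spec (x : ℕ) : g (bIdx x) ≤ x ∧ x < g (bIdx x + 1) := by
  induction x with
  | zero => exact ⟨Nat.le_refl 0, by rw [g_succ]; exact Nat.mul_pos (by omega) (Nat.succ_pos _)⟩
  | succ x ih =>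
    show g (if g (bIdx x + 1) ≤ x+1 then bIdx x + 1 else bIdx x) ≤ x + 1 ∧
      x + 1 < g ((if g (bIdx x + 1) ≤ x+1 then bIdx x + 1 else bIdx x) + 1)
    by_cases h : g (bIdx x + 1) ≤ x + 1
    · rw [if_pos h]
      refine ⟨h, ?_⟩
      have h1 : g (bIdx x + 1) = x + 1 := le_antisymm h (by omega)
      have h2 := g_strictMono (show bIdx x + 1 < bIdx x + 1 + 1 by omega)
      omega
    · rw [if_neg h]
      exact ⟨by omega, by omega⟩

theorem bIdx_eq {t x : ℕ} (h1 : g t ≤ x) (h2 : x < g (t+1)) : bIdx x = t := by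
  obtain ⟨hb1, hb2⟩ := bIdx_spec x
  have c1 : bIdx x < t + 1 := g_strictMono.lt_iff_lt.1 (lt_of_le_of_lt hb1 h2)
  have c2 : t < bIdx x + 1 := g_strictMono.lt_iff_lt.1 (lt_of_le_of_lt h1 hb2)
  omega

theorem bIdx_g (t : ℕ) : bIdx (g t) = t :=
  bIdx_eq (le_refl _) (g_strictMono (Nat.lt_succ_self t))

/-- `n` is a true stage of the enumeration. -/
def tru (n : ℕ) : Prop := ∀ m, n < m → enumA n < enumA m

theorem tru_infinite : {n | tru n}.Infinite := by
  apply Set.infinite_of_forall_exists_gt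
  intro a
  have hP : ∃ v, ∃ m, a < m ∧ enumA m = v := ⟨enumA (a+1), a+1, Nat.lt_succ_self a, rfl⟩
  classical
  obtain ⟨m, ham, hm⟩ := Nat.find_spec hP
  refine ⟨m, ?_, ham⟩
  intro m' hmm'
  have h1 : Nat.find hP ≤ enumA m' := Nat.find_min' hP ⟨m', by omega, rfl⟩
  have h2 : enumA m ≠ enumA m' := fun h => (Nat.ne_of_lt hmm') (enumA_injective h)
  omega

/-- The hypersimple set: union of the blocks of non-true stages. -/
def Aset : Set ℕ := {x | ¬ tru (bIdx x)}

theorem mem_compl_Aset {x : ℕ} : x ∈ Asetᶜ ↔ tru (bIdx x) := by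
  simp [Aset]

theorem mem_Aset_iff (x : ℕ) :
    x ∈ Aset ↔ ∃ m, bIdx x < m ∧ enumA m ≤ enumA (bIdx x) := by
  simp only [Aset, Set.mem_setOf_eq, tru]
  push_neg
  rfl

theorem Aset_re : REPred (· ∈ Aset) := by
  have hdec : Primrec fun q : ℕ × ℕ => decide (bIdx q.1 < q.2 ∧ enumA q.2 ≤ enumA (bIdx q.1)) := by
    have h1 : PrimrecPred fun q : ℕ × ℕ => bIdx q.1 < q.2 :=
      PrimrecRel.comp Primrec.nat_lt (bIdx_primrec.comp Primrec.fst) Primrec.snd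
    have h2 : PrimrecPred fun q : ℕ × ℕ => enumA q.2 ≤ enumA (bIdx q.1) :=
      PrimrecRel.comp Primrec.nat_le (enumA_primrec.comp Primrec.snd)
        (enumA_primrec.comp (bIdx_primrec.comp Primrec.fst))
    exact (h1.and h2).decide
  have hpart : Partrec fun x : ℕ => Nat.rfind fun m =>
      (Part.some (decide (bIdx x < m ∧ enumA m ≤ enumA (bIdx x))) : Part Bool) := by
    apply Partrec.rfind
    have hdec2 : Primrec₂ fun x m => decide (bIdx x < m ∧ enumA m ≤ enumA (bIdx x)) := hdec
    exact hdec2.to_comp.partrec₂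
  have := hpart.dom_re
  apply this.of_eq
  intro x
  refine Nat.rfind_dom.trans ?_
  rw [mem_Aset_iff]
  constructor
  · rintro ⟨n, hn, -⟩
    simp only [Part.mem_some_iff] at hn
    exact ⟨n, by simpa using hn.symm⟩
  · rintro ⟨m, hm⟩
    classical
    have hPm : ∃ n, decide (bIdx x < n ∧ enumA n ≤ enumA (bIdx x)) = true := ⟨m, by simpa using hm⟩
    refine ⟨Nat.find hPm, ?_, fun _ => trivial⟩
    simpa using (Nat.find_spec hPm).symm

theorem compl_Aset_infinite : Asetᶜ.Infinite := by
  have h : g '' {n | tru n} ⊆ Asetᶜ := by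
    rintro x ⟨t, ht, rfl⟩
    rw [mem_compl_Aset, bIdx_g]
    exact ht
  exact Set.Infinite.mono h (Set.Infinite.image (g_strictMono.injective.injOn) tru_infinite)



/-! ### True-stage facts -/

noncomputable def tst : ℕ → ℕ := Nat.nth tru

theorem tru_tst (k : ℕ) : tru (tst k) := Nat.nth_mem_of_infinite tru_infinite k

theorem tst_strictMono : StrictMono tst := Nat.nth_strictMono tru_infinite

theorem le_tst (k : ℕ) : k ≤ tst k := tst_strictMono.le_apply

open Classical in
theorem tru_le_tst {n k : ℕ} (hn : tru n) (h : n < tst (k+1)) : n ≤ tst k := by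
  have h1 : Nat.nth tru (Nat.count tru n) = n := Nat.nth_count hn
  have h2 : tst (Nat.count tru n) < tst (k+1) := by
    show Nat.nth tru _ < _; rw [h1]; exact h
  have hj : Nat.count tru n < k + 1 := tst_strictMono.lt_iff_lt.1 h2
  calc n = tst (Nat.count tru n) := h1.symm
    _ ≤ tst k := tst_strictMono.monotone (by omega)

open Classical in
theorem tst0_le {n : ℕ} (hn : tru n) : tst 0 ≤ n := by
  have h1 : Nat.nth tru (Nat.count tru n) = n := Nat.nth_count hn
  calc tst 0 ≤ tst (Nat.count tru n) := tst_strictMono.monotone (Nat.zero_le _)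
    _ = n := h1

theorem enumA_tst_ge (k : ℕ) : k ≤ enumA (tst k) :=
  (show StrictMono fun k => enumA (tst k) from
    fun i j hij => (tru_tst i) _ (tst_strictMono hij)).le_apply

theorem gtst_mem (k : ℕ) : g (tst k) ∈ Asetᶜ := by
  rw [mem_compl_Aset, bIdx_g]; exact tru_tst k

/-! ### Auxiliary computable functions for the majorization argument -/

/-- Running maximum of `f`. -/
def mxF (f : ℕ → ℕ) : ℕ → ℕ := fun n => Nat.rec (f 0) (fun y ih => max (f (y+1)) ih) n

theorem mxF_computable {f : ℕ → ℕ} (hf : Computable f) : Computable (mxF f) := by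
  have hstep : Computable fun p : ℕ × (ℕ × ℕ) => max (f (p.2.1 + 1)) p.2.2 :=
    Primrec.nat_max.to_comp.comp
      (hf.comp (Computable.succ.comp (Computable.fst.comp Computable.snd)))
      (Computable.snd.comp Computable.snd)
  have h2 : Computable₂ fun (_ : ℕ) (p : ℕ × ℕ) => max (f (p.1 + 1)) p.2 := hstep
  exact (Computable.nat_rec Computable.id (Computable.const (f 0)) h2).of_eq fun n => rfl

theorem le_mxF (f : ℕ → ℕ) (n : ℕ) : f n ≤ mxF f n := by
  cases n with
  | zero => exact le_refl _
  | succ n => exact le_max_left _ _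

theorem mxF_mono (f : ℕ → ℕ) : Monotone (mxF f) :=
  monotone_nat_of_le_succ fun n => le_max_right _ _

/-- The iterated bound `MM f 0 = 0`, `MM f (k+1) = g (mxF f (MM f k) + 1)`. -/
def MM (f : ℕ → ℕ) : ℕ → ℕ := fun k => Nat.rec 0 (fun _ ih => g (mxF f ih + 1)) k

theorem MM_computable {f : ℕ → ℕ} (hf : Computable f) : Computable (MM f) := by
  have hstep : Computable fun p : ℕ × (ℕ × ℕ) => g (mxF f p.2.2 + 1) :=
    g_primrec.to_comp.comp (Computable.succ.comp
      ((mxF_computable hf).comp (Computable.snd.comp Computable.snd)))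
  have h2 : Computable₂ fun (_ : ℕ) (p : ℕ × ℕ) => g (mxF f p.2 + 1) := hstep
  exact (Computable.nat_rec Computable.id (Computable.const 0) h2).of_eq fun n => rfl

/-- Bounded search for `x` in the enumeration: `CHK2 x s = true ↔ ∃ i < s, enumA i = x`. -/
def CHK2 (x s : ℕ) : Bool := Nat.rec false (fun i ih => ih || (enumA i == x)) s

theorem CHK2_computable : Computable₂ CHK2 := by
  have hstep : Computable fun p : (ℕ × ℕ) × (ℕ × Bool) => (p.2.2 || (enumA p.2.1 == p.1.1)) :=
    (Primrec.or.comp (Primrec.snd.comp Primrec.snd)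
      (Primrec.beq.comp (enumA_primrec.comp (Primrec.fst.comp Primrec.snd))
        (Primrec.fst.comp Primrec.fst))).to_comp
  have h2 : Computable₂ fun (p : ℕ × ℕ) (q : ℕ × Bool) => (q.2 || (enumA q.1 == p.1)) := hstep
  exact (Computable.nat_rec Computable.snd (Computable.const false) h2).of_eq fun p => rfl

theorem CHK2_iff (x s : ℕ) : CHK2 x s = true ↔ ∃ i, i < s ∧ enumA i = x := by
  induction s with
  | zero => simp [CHK2]
  | succ s ih =>
    show (CHK2 x s || (enumA s == x)) = true ↔ _
    rw [Bool.or_eq_true, ih, beq_iff_eq]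
    constructor
    · rintro (⟨i, h1, h2⟩ | h)
      · exact ⟨i, by omega, h2⟩
      · exact ⟨s, by omega, h⟩
    · rintro ⟨i, h1, h2⟩
      rcases Nat.lt_or_ge i s with h | h
      · exact Or.inl ⟨i, h, h2⟩
      · exact Or.inr (by rwa [show s = i by omega])

/-! ### Hyperimmunity of the complement -/

open Classical in
theorem not_majorized :
    ¬ ∃ f : ℕ → ℕ, Computable f ∧ ∀ n : ℕ, Nat.nth (· ∈ Asetᶜ) n ≤ f n := by
  rintro ⟨f, hfc, hf⟩
  apply W_not_computable
  have hnth : ∀ n, Nat.nth (· ∈ Asetᶜ) n ≤ mxF f n := fun n => (hf n).trans (le_mxF f n)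
  have main : ∀ k, g (tst k) ≤ mxF f (MM f k) := by
    intro k
    induction k with
    | zero =>
      have h1 : Nat.count (· ∈ Asetᶜ) (g (tst 0)) = 0 := by
        rw [Nat.count_eq_card_filter_range, Finset.card_eq_zero, Finset.filter_eq_empty_iff]
        intro i hi
        simp only [Finset.mem_range] at hi
        intro hmem
        have htru : tru (bIdx i) := mem_compl_Aset.1 hmem
        have h2 : g (bIdx i) ≤ i := (bIdx_spec i).1
        have h3 : bIdx i < tst 0 := g_strictMono.lt_iff_lt.1 (lt_of_le_of_lt h2 hi)
        exact absurd (tst0_le htru) (by omega)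
      have h4 : Nat.nth (· ∈ Asetᶜ) 0 = g (tst 0) := by
        conv_lhs => rw [← h1]
        exact Nat.nth_count (gtst_mem 0)
      calc g (tst 0) = Nat.nth (· ∈ Asetᶜ) 0 := h4.symm
        _ ≤ mxF f 0 := hnth 0
    | succ k ih =>
      have hnthm :
          Nat.nth (· ∈ Asetᶜ) (Nat.count (· ∈ Asetᶜ) (g (tst (k+1)))) = g (tst (k+1)) :=
        Nat.nth_count (gtst_mem (k+1))
      have hm : Nat.count (· ∈ Asetᶜ) (g (tst (k+1))) ≤ g (tst k + 1) := by
        rw [Nat.count_eq_card_filter_range]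
        calc ((Finset.range (g (tst (k+1)))).filter (· ∈ Asetᶜ)).card
            ≤ (Finset.range (g (tst k + 1))).card := by
              apply Finset.card_le_card
              intro i hi
              simp only [Finset.mem_filter, Finset.mem_range] at hi
              obtain ⟨hilt, hmem⟩ := hi
              have htru : tru (bIdx i) := mem_compl_Aset.1 hmem
              have h2 : g (bIdx i) ≤ i := (bIdx_spec i).1
              have h3 : bIdx i < tst (k+1) := g_strictMono.lt_iff_lt.1 (lt_of_le_of_lt h2 hilt)
              have h4 : bIdx i ≤ tst k := tru_le_tst htru h3
              have h5 : i < g (bIdx i + 1) := (bIdx_spec i).2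
              have h6 : g (bIdx i + 1) ≤ g (tst k + 1) := g_strictMono.monotone (by omega)
              simp only [Finset.mem_range]
              omega
          _ = g (tst k + 1) := Finset.card_range _
      have hMk1 : g (tst k + 1) ≤ MM f (k+1) := by
        have h5 : tst k ≤ mxF f (MM f k) := le_trans (le_g _) ih
        show g (tst k + 1) ≤ g (mxF f (MM f k) + 1)
        exact g_strictMono.monotone (by omega)
      calc g (tst (k+1)) = Nat.nth (· ∈ Asetᶜ) _ := hnthm.symm
        _ ≤ mxF f (Nat.count (· ∈ Asetᶜ) (g (tst (k+1)))) := hnth _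
        _ ≤ mxF f (MM f (k+1)) := mxF_mono f (le_trans hm hMk1)
  have htsthb : ∀ k, tst k ≤ mxF f (MM f k) := fun k => le_trans (le_g _) (main k)
  have main2 : ∀ x, x ∈ W ↔ CHK2 x (mxF f (MM f (x+1)) + 1) = true := by
    intro x
    rw [CHK2_iff]
    constructor
    · rintro ⟨m, rfl⟩
      have hm : m ≤ tst (enumA m + 1) := by
        by_contra hgt
        push_neg at hgt
        have h1 : enumA (tst (enumA m + 1)) < enumA m := tru_tst _ m hgt
        have h2 : enumA m + 1 ≤ enumA (tst (enumA m + 1)) := enumA_tst_ge (enumA m + 1)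
        omega
      exact ⟨m, by have := htsthb (enumA m + 1); omega, rfl⟩
    · rintro ⟨i, -, rfl⟩
      exact ⟨i, rfl⟩
  apply ComputablePred.computable_iff.2
  refine ⟨fun x => CHK2 x (mxF f (MM f (x+1)) + 1), ?_, ?_⟩
  · exact CHK2_computable.comp Computable.id
      (Computable.succ.comp ((mxF_computable hfc).comp
        ((MM_computable hfc).comp Computable.succ)))
  · funext x
    exact propext (main2 x)



/-! ### Density -/

theorem pden_nonneg (S : Set ℕ) (n : ℕ) : 0 ≤ pden S n :=
  div_nonneg (Nat.cast_nonneg _) (Nat.cast_nonneg _)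

theorem ncard_Iio_nat (m : ℕ) : (Set.Iio m).ncard = m := by
  rw [← Finset.coe_range, Set.ncard_coe_finset, Finset.card_range]

theorem pden_le_one (S : Set ℕ) (n : ℕ) : pden S n ≤ 1 := by
  rcases Nat.eq_zero_or_pos n with rfl | hn
  · simp [pden]
  · rw [pden, div_le_one (by exact_mod_cast hn)]
    have h1 : (S ∩ Set.Iio n).ncard ≤ n := by
      calc (S ∩ Set.Iio n).ncard ≤ (Set.Iio n).ncard :=
          Set.ncard_le_ncard Set.inter_subset_right (Set.finite_Iio _)
        _ = n := ncard_Iio_nat n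
    exact_mod_cast h1

theorem ncard_bound (k : ℕ) : (Aset ∩ Set.Iio (g (tst k + 1))).ncard ≤ g (tst k) := by
  have hsub : Aset ∩ Set.Iio (g (tst k + 1)) ⊆ Set.Iio (g (tst k)) := by
    rintro x ⟨hxA, hxlt⟩
    simp only [Set.mem_Iio] at hxlt ⊢
    by_contra hge
    push_neg at hge
    have hbx : bIdx x = tst k := bIdx_eq hge hxlt
    exact hxA (show tru (bIdx x) from hbx ▸ tru_tst k)
  calc (Aset ∩ Set.Iio (g (tst k + 1))).ncard ≤ (Set.Iio (g (tst k))).ncard :=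
      Set.ncard_le_ncard hsub (Set.finite_Iio _)
    _ = g (tst k) := ncard_Iio_nat _

theorem pden_bound (k : ℕ) : pden Aset (g (tst k + 1)) ≤ 1 / ((k : ℝ) + 1) := by
  have hden : ((k:ℝ)+1) * ((g (tst k) : ℝ) + 1) ≤ (g (tst k + 1) : ℝ) := by
    have h1 : (k+1) * (g (tst k) + 1) ≤ g (tst k + 1) :=
      calc (k+1) * (g (tst k) + 1) ≤ (tst k + 1) * (g (tst k) + 1) :=
            Nat.mul_le_mul_right _ (by have := le_tst k; omega)
        _ ≤ g (tst k + 1) := g_mul_bound (tst k)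
    exact_mod_cast h1
  have hnum : ((Aset ∩ Set.Iio (g (tst k + 1))).ncard : ℝ) ≤ (g (tst k) : ℝ) + 1 := by
    have h2 := ncard_bound k
    have h3 : ((Aset ∩ Set.Iio (g (tst k + 1))).ncard : ℝ) ≤ (g (tst k) : ℝ) := by
      exact_mod_cast h2
    linarith
  have hkpos : (0:ℝ) < (k:ℝ) + 1 := by positivity
  have hgpos : (0:ℝ) ≤ (g (tst k) : ℝ) := Nat.cast_nonneg _
  have hpos : (0:ℝ) < (g (tst k + 1) : ℝ) := lt_of_lt_of_le (by nlinarith) hden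
  rw [pden, div_le_div_iff₀ hpos hkpos]
  nlinarith

theorem liminf_pden_zero : liminf (fun n => pden Aset n) atTop = 0 := by
  have h0 : ∀ n, 0 ≤ pden Aset n := pden_nonneg Aset
  have hbdd : IsBoundedUnder (· ≥ ·) atTop (fun n => pden Aset n) :=
    isBoundedUnder_of ⟨0, fun n => h0 n⟩
  have hcb : IsCoboundedUnder (· ≥ ·) atTop (fun n => pden Aset n) :=
    isCoboundedUnder_ge_of_le atTop (x := 1) (pden_le_one Aset)
  apply le_antisymm
  · by_contra hlt
    push_neg at hlt
    have hL : 0 < liminf (fun n => pden Aset n) atTop := hlt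
    set L := liminf (fun n => pden Aset n) atTop with hLdef
    have hfreq : ∃ᶠ n in atTop, pden Aset n ≤ L / 2 := by
      rw [frequently_atTop]
      intro N
      set k := max N ⌈(2:ℝ)/L⌉₊ with hk
      refine ⟨g (tst k + 1), ?_, ?_⟩
      · calc N ≤ k := le_max_left _ _
          _ ≤ tst k := le_tst k
          _ ≤ tst k + 1 := Nat.le_succ _
          _ ≤ g (tst k + 1) := le_g _
      · refine le_trans (pden_bound k) ?_
        have h2 : (2:ℝ)/L ≤ (k:ℝ) + 1 := by
          calc (2:ℝ)/L ≤ (⌈(2:ℝ)/L⌉₊ : ℝ) := Nat.le_ceil _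
            _ ≤ (k:ℝ) := by exact_mod_cast le_max_right N _
            _ ≤ (k:ℝ) + 1 := by linarith
        rw [div_le_div_iff₀ (by positivity) (by norm_num)]
        rw [div_le_iff₀ hL] at h2
        linarith
    have := liminf_le_of_frequently_le hfreq hbdd
    rw [← hLdef] at this
    linarith
  · exact le_liminf_of_le hcb (Eventually.of_forall h0)

end Stmt14

theorem stmt14 :
    ∃ A : Set ℕ, REPred (· ∈ A) ∧ Aᶜ.Infinite ∧
      (¬ ∃ f : ℕ → ℕ, Computable f ∧ ∀ n : ℕ, Nat.nth (· ∈ Aᶜ) n ≤ f n) ∧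
      liminf (fun n => pden A n) atTop = 0 :=
  ⟨Stmt14.Aset, Stmt14.Aset_re, Stmt14.compl_Aset_infinite, Stmt14.not_majorized,
    Stmt14.liminf_pden_zero⟩
end
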